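/- Let N be a sorting network with n levels. If two pseudoline arrangements supported by N have equal contact graphs (as directed multigraphs on the labeled vertex set {1,…,n}), then they are equal; equivalently, any pseudoline arrangement supported by N can be reconstructed from N together with its contact graph. -/

import Mathlib

open Finset
open scoped Classical Pointwise

namespace BrickP

/-! ### Networks and pseudoline arrangements

A network with `n` levels (labeled `0,…,n-1` from bottom to top) and `m` commutators
(labeled `0,…,m-1` from left to right) is encoded by a word `N : Fin m → Fin (n-1)`:
the `j`-th commutator joins levels `(N j).1` and `(N j).1 + 1`.
A pseudoline arrangement supported by `N` is encoded by its set `C` of crossings: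
the word of adjacent transpositions read at the positions of `C` must be a reduced
expression of the longest element `w₀` of the symmetric group, i.e. its product is `w₀`
and its length is `n.choose 2`.  The contacts are the commutators not in `C`. -/

/-- The adjacent transposition of `Fin n` exchanging the levels `i` and `i+1`. -/
def adjT (n : ℕ) (i : Fin (n - 1)) : Equiv.Perm (Fin n) :=
  Equiv.swap ⟨i.1, by have := i.2; omega⟩ ⟨i.1 + 1, by have := i.2; omega⟩

/-- The longest element of the symmetric group on `Fin n`: the order-reversing permutation. -/
def w0 (n : ℕ) : Equiv.Perm (Fin n) := Fin.revPerm

/-- `C` is the crossing set of a pseudoline arrangement supported by the network `N`. -/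
def IsArr (n : ℕ) {m : ℕ} (N : Fin m → Fin (n - 1)) (C : Finset (Fin m)) : Prop :=
  C.card = n.choose 2 ∧
    (((List.finRange m).filter (fun j => j ∈ C)).map (fun j => adjT n (N j))).prod = w0 n

instance (n : ℕ) {m : ℕ} (N : Fin m → Fin (n - 1)) : DecidablePred (IsArr n N) := fun C => by
  unfold IsArr; infer_instance

/-- `statePerm n N C t i` is the level occupied by the `i`-th pseudoline of the arrangement
with crossing set `C` after the first `t` commutators of the network `N`. -/
def statePerm (n : ℕ) {m : ℕ} (N : Fin m → Fin (n - 1)) (C : Finset (Fin m)) :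
    ℕ → Equiv.Perm (Fin n)
  | 0 => 1
  | t + 1 =>
    (if h : t < m then (if (⟨t, h⟩ : Fin m) ∈ C then adjT n (N ⟨t, h⟩) else 1) else 1) *
      statePerm n N C t

/-- The `j`-th commutator has another commutator at the same level gap to its right;
the brick of the network associated to `j` is the bounded cell whose left wall is `j`. -/
def IsBrick {n m : ℕ} (N : Fin m → Fin (n - 1)) (j : Fin m) : Prop :=
  ∃ j' : Fin m, j < j' ∧ N j' = N j

instance {n m : ℕ} (N : Fin m → Fin (n - 1)) : DecidablePred (IsBrick N) := fun j => by
  unfold IsBrick; infer_instance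

/-- The `i`-th pseudoline of the arrangement `C` passes above the brick with left wall `j`
(equivalently, above the commutator `j`). -/
def Above (n : ℕ) {m : ℕ} (N : Fin m → Fin (n - 1)) (C : Finset (Fin m))
    (i : Fin n) (j : Fin m) : Prop :=
  (N j).1 < (statePerm n N C (j.1 + 1) i).1

instance (n : ℕ) {m : ℕ} (N : Fin m → Fin (n - 1)) (C : Finset (Fin m)) (i : Fin n) (j : Fin m) :
    Decidable (Above n N C i j) := by unfold Above; infer_instance

/-- The brick vector of an arrangement: its `i`-th coordinate is the number of bricks of the
network lying below the `i`-th pseudoline. -/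
noncomputable def brickVector (n : ℕ) {m : ℕ} (N : Fin m → Fin (n - 1)) (C : Finset (Fin m)) :
    Fin n → ℝ :=
  fun i => ((univ.filter (fun j : Fin m => IsBrick N j ∧ Above n N C i j)).card : ℝ)

/-- The brick polytope of a network: the convex hull of the brick vectors of all pseudoline
arrangements supported by it. -/
noncomputable def brickPolytope (n : ℕ) {m : ℕ} (N : Fin m → Fin (n - 1)) : Set (Fin n → ℝ) :=
  convexHull ℝ {x | ∃ C, IsArr n N C ∧ brickVector n N C = x}

/-! ### The contact graph -/

/-- The source of the arc of the contact graph associated to the contact `j`: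
the pseudoline passing above the contact. -/
def arcSrc (n : ℕ) {m : ℕ} (N : Fin m → Fin (n - 1)) (C : Finset (Fin m)) (j : Fin m) : Fin n :=
  (statePerm n N C (j.1 + 1))⁻¹ ⟨(N j).1 + 1, by have := (N j).2; omega⟩

/-- The target of the arc of the contact graph associated to the contact `j`:
the pseudoline passing below the contact. -/
def arcTgt (n : ℕ) {m : ℕ} (N : Fin m → Fin (n - 1)) (C : Finset (Fin m)) (j : Fin m) : Fin n :=
  (statePerm n N C (j.1 + 1))⁻¹ ⟨(N j).1, by have := (N j).2; omega⟩

/-- The contact graph of an arrangement, as the multiset of its arcs (a directed multigraph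
on the vertex set `Fin n`). -/
def contactMG (n : ℕ) {m : ℕ} (N : Fin m → Fin (n - 1)) (C : Finset (Fin m)) :
    Multiset (Fin n × Fin n) :=
  (univ.filter (fun j : Fin m => j ∉ C)).val.map (fun j => (arcSrc n N C j, arcTgt n N C j))

/-- There is an arc from `a` to `b` in the contact graph of the arrangement `C`. -/
def ArcRel (n : ℕ) {m : ℕ} (N : Fin m → Fin (n - 1)) (C : Finset (Fin m)) (a b : Fin n) : Prop :=
  ∃ j : Fin m, j ∉ C ∧ arcSrc n N C j = a ∧ arcTgt n N C j = b

/-- `a` and `b` lie in the same connected component of the contact graph of `C`. -/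
def ConnRel (n : ℕ) {m : ℕ} (N : Fin m → Fin (n - 1)) (C : Finset (Fin m)) (a b : Fin n) : Prop :=
  Relation.ReflTransGen (fun u v => ArcRel n N C u v ∨ ArcRel n N C v u) a b

/-- A network is irreducible when the contact graphs of all supported arrangements
are connected. -/
def Irreducible (n : ℕ) {m : ℕ} (N : Fin m → Fin (n - 1)) : Prop :=
  ∀ C, IsArr n N C → ∀ a b : Fin n, ConnRel n N C a b

/-- The contact graph of the arrangement `C` is an acyclic directed multigraph. -/
def AcyclicArcs (n : ℕ) {m : ℕ} (N : Fin m → Fin (n - 1)) (C : Finset (Fin m)) : Prop :=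
  ∀ a : Fin n, ¬ Relation.TransGen (ArcRel n N C) a a

/-! ### Polyhedral notions -/

/-- Dimension of a subset of `ℝⁿ`: the rank of the direction of its affine span. -/
noncomputable def dimOf {n : ℕ} (s : Set (Fin n → ℝ)) : ℕ :=
  Module.finrank ℝ (affineSpan ℝ s).direction

/-- The cone positively spanned by a set of vectors. -/
def coneOf {n : ℕ} (S : Set (Fin n → ℝ)) : Set (Fin n → ℝ) :=
  {x | ∃ (k : ℕ) (c : Fin k → ℝ) (v : Fin k → Fin n → ℝ),
      (∀ i, 0 ≤ c i) ∧ (∀ i, v i ∈ S) ∧ x = ∑ i, c i • v i}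

/-- Standard scalar product on `Fin n → ℝ`. -/
def dotp {n : ℕ} (u x : Fin n → ℝ) : ℝ := ∑ i, u i * x i

/-- The face of `P` minimizing the linear form `⟨u, ·⟩`. -/
def minFace {n : ℕ} (P : Set (Fin n → ℝ)) (u : Fin n → ℝ) : Set (Fin n → ℝ) :=
  {x | x ∈ P ∧ ∀ y ∈ P, dotp u x ≤ dotp u y}

/-- `u` is a normal vector of a facet of `P` (facet = face of codimension 1), with the
convention that the facet is the subset of `P` minimizing `⟨u, ·⟩`. -/
def IsFacetNormal {n : ℕ} (P : Set (Fin n → ℝ)) (u : Fin n → ℝ) : Prop :=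
  u ≠ 0 ∧ (minFace P u).Nonempty ∧ dimOf (minFace P u) + 1 = dimOf P

/-- `F` is a nonempty face of dimension `k` of the convex set `P`. -/
def IsKFace {n : ℕ} (P : Set (Fin n → ℝ)) (k : ℕ) (F : Set (Fin n → ℝ)) : Prop :=
  IsExtreme ℝ P F ∧ Convex ℝ F ∧ F.Nonempty ∧ dimOf F = k

/-- The characteristic vector of a subset of coordinates. -/
def charVec {n : ℕ} (V : Finset (Fin n)) : Fin n → ℝ := fun i => if i ∈ V then 1 else 0

/-! ### Directed cuts -/

/-- The arcs of the contact graph of `C` crossing the vertex partition `(Vᶜ, V)`. -/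
def cutArcs (n : ℕ) {m : ℕ} (N : Fin m → Fin (n - 1)) (C : Finset (Fin m)) (V : Finset (Fin n)) :
    Set (Fin n × Fin n) :=
  {p | ArcRel n N C p.1 p.2 ∧ ((p.1 ∈ V ∧ p.2 ∉ V) ∨ (p.1 ∉ V ∧ p.2 ∈ V))}

/-- `(Vᶜ, V)` is a minimal directed cut of the contact graph of `C`, with sink set `V`:
all crossing arcs are directed towards `V` and the set of crossing arcs is
inclusion-minimal among edge cuts. -/
def MinDirCut (n : ℕ) {m : ℕ} (N : Fin m → Fin (n - 1)) (C : Finset (Fin m))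
    (V : Finset (Fin n)) : Prop :=
  V.Nonempty ∧ V ≠ univ ∧ (∀ a b, ArcRel n N C a b → ¬(a ∈ V ∧ b ∉ V)) ∧
    ∀ W : Finset (Fin n), W.Nonempty → W ≠ univ →
      cutArcs n N C W ⊆ cutArcs n N C V → cutArcs n N C W = cutArcs n N C V

/-! ### The simplicial complex `Δ(N)` and the face maps `Φ`, `Ψ` -/

/-- `γ` is a face of the simplicial complex `Δ(N)`: the network obtained by erasing the
commutators of `γ` is still sorting, i.e. some supported arrangement has all of `γ`
among its contacts. -/
def IsFaceOfCplx (n : ℕ) {m : ℕ} (N : Fin m → Fin (n - 1)) (γ : Finset (Fin m)) : Prop :=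
  ∃ C, IsArr n N C ∧ Disjoint γ C

/-- `Φ` associates to `X ⊆ ℝⁿ` the set of commutators of `N` which are contacts in all
supported arrangements whose brick vector lies in `X`. -/
def PhiMap (n : ℕ) {m : ℕ} (N : Fin m → Fin (n - 1)) (X : Set (Fin n → ℝ)) : Set (Fin m) :=
  {j | ∀ C, IsArr n N C → brickVector n N C ∈ X → j ∉ C}

/-- `Ψ` associates to a set `γ` of commutators of `N` the convex hull of the brick vectors
of the arrangements of `Arr(N|γ)`, i.e. whose contacts contain `γ`. -/
noncomputable def PsiMap (n : ℕ) {m : ℕ} (N : Fin m → Fin (n - 1)) (γ : Set (Fin m)) :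
    Set (Fin n → ℝ) :=
  convexHull ℝ {x | ∃ C, IsArr n N C ∧ (∀ j ∈ γ, j ∉ C) ∧ brickVector n N C = x}

/-- Same component relation in the contact graph of `C` with the arcs of `γ` removed. -/
def ConnRelAvoid (n : ℕ) {m : ℕ} (N : Fin m → Fin (n - 1)) (C : Finset (Fin m))
    (γ : Set (Fin m)) (a b : Fin n) : Prop :=
  Relation.ReflTransGen
    (fun u v =>
      (∃ j : Fin m, j ∉ C ∧ j ∉ γ ∧ arcSrc n N C j = u ∧ arcTgt n N C j = v) ∨
      (∃ j : Fin m, j ∉ C ∧ j ∉ γ ∧ arcSrc n N C j = v ∧ arcTgt n N C j = u)) a b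

/-- One step of the quotient multigraph `Λ^#/(Λ^#∖γ^#)`: an arc of `γ^#` between the
components of `a` and `b` in `Λ^#∖γ^#`. -/
def QStep (n : ℕ) {m : ℕ} (N : Fin m → Fin (n - 1)) (C : Finset (Fin m)) (γ : Set (Fin m))
    (a b : Fin n) : Prop :=
  ∃ a' b' : Fin n, ConnRelAvoid n N C γ a a' ∧
    (∃ j : Fin m, j ∉ C ∧ j ∈ γ ∧ arcSrc n N C j = a' ∧ arcTgt n N C j = b') ∧
    ConnRelAvoid n N C γ b' b

/-- A set `γ` of commutators of `N` is `k`-admissible. -/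
def KAdmissible (n : ℕ) {m : ℕ} (N : Fin m → Fin (n - 1)) (γ : Set (Fin m)) (k : ℕ) : Prop :=
  ∃ C, IsArr n N C ∧ (∀ j ∈ γ, j ∉ C) ∧
    {S : Set (Fin n) | ∃ a, S = {b | ConnRelAvoid n N C γ a b}}.ncard = n - k ∧
    ∀ a, ¬ Relation.TransGen (QStep n N C γ) a a

/-! ### Restrictions of networks -/

/-- The pseudoline of the arrangement `C` entering the commutator `j` from below. -/
def pLow (n : ℕ) {m : ℕ} (N : Fin m → Fin (n - 1)) (C : Finset (Fin m)) (j : Fin m) : Fin n :=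
  (statePerm n N C j.1)⁻¹ ⟨(N j).1, by have := (N j).2; omega⟩

/-- The pseudoline of the arrangement `C` entering the commutator `j` from above. -/
def pHigh (n : ℕ) {m : ℕ} (N : Fin m → Fin (n - 1)) (C : Finset (Fin m)) (j : Fin m) : Fin n :=
  (statePerm n N C j.1)⁻¹ ⟨(N j).1 + 1, by have := (N j).2; omega⟩

/-- `U` is a connected component of the contact graph of the arrangement `C`. -/
def IsComp (n : ℕ) {m : ℕ} (N : Fin m → Fin (n - 1)) (C : Finset (Fin m))
    (U : Finset (Fin n)) : Prop :=
  ∃ a : Fin n, U = univ.filter (fun b => ConnRel n N C a b)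

/-- The commutators of `N` whose two incident pseudolines (w.r.t. the arrangement `C`)
both belong to `U`. -/
def commsIn (n : ℕ) {m : ℕ} (N : Fin m → Fin (n - 1)) (C : Finset (Fin m))
    (U : Finset (Fin n)) : Finset (Fin m) :=
  univ.filter (fun j => pLow n N C j ∈ U ∧ pHigh n N C j ∈ U)

/-- The restriction of the network `N` to the curves of the pseudolines of `U`
(w.r.t. the arrangement `C`): it has `U.card` levels, its commutators are those of
`commsIn n N C U` in left-right order, and the level of such a commutator is the number
of curves of `U` passing below it. -/
noncomputable def restNet (n : ℕ) {m : ℕ} (N : Fin m → Fin (n - 1)) (C : Finset (Fin m))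
    (U : Finset (Fin n)) (j' : Fin (commsIn n N C U).card) : Fin (U.card - 1) := by
  refine ⟨(U.filter (fun u =>
      (statePerm n N C (((commsIn n N C U).orderIsoOfFin rfl j').1).1 u).1 <
        (N ((commsIn n N C U).orderIsoOfFin rfl j').1).1)).card, ?_⟩
  set j : Fin m := ((commsIn n N C U).orderIsoOfFin rfl j').1 with hj
  have hmem : j ∈ commsIn n N C U := ((commsIn n N C U).orderIsoOfFin rfl j').2
  rw [commsIn, Finset.mem_filter] at hmem
  obtain ⟨-, hL, hH⟩ := hmem
  have hlowlvl : (statePerm n N C j.1 (pLow n N C j)).1 = (N j).1 := by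
    unfold pLow; rw [← Equiv.Perm.mul_apply, mul_inv_cancel, Equiv.Perm.one_apply]
  have hhighlvl : (statePerm n N C j.1 (pHigh n N C j)).1 = (N j).1 + 1 := by
    unfold pHigh; rw [← Equiv.Perm.mul_apply, mul_inv_cancel, Equiv.Perm.one_apply]
  have hne : pLow n N C j ≠ pHigh n N C j := by
    intro h; rw [h, hhighlvl] at hlowlvl; omega
  have hsub : U.filter (fun u => (statePerm n N C j.1 u).1 < (N j).1)
      ⊆ (U.erase (pLow n N C j)).erase (pHigh n N C j) := by
    intro u hu
    rw [Finset.mem_filter] at hu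
    rw [Finset.mem_erase, Finset.mem_erase]
    refine ⟨fun h => ?_, fun h => ?_, hu.1⟩
    · rw [h] at hu; omega
    · rw [h] at hu; omega
  have hcard := Finset.card_le_card hsub
  rw [Finset.card_erase_of_mem (Finset.mem_erase.mpr ⟨hne.symm, hH⟩),
    Finset.card_erase_of_mem hL] at hcard
  have hU2 : 2 ≤ U.card := Finset.one_lt_card.mpr ⟨_, hL, _, hH, hne⟩
  omega

/-- The indices, in the restricted network, of the commutators of `γ` belonging to the
restriction. -/
def restIdx (n : ℕ) {m : ℕ} (N : Fin m → Fin (n - 1)) (C : Finset (Fin m)) (U : Finset (Fin n))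
    (γ : Finset (Fin m)) : Finset (Fin (commsIn n N C U).card) :=
  univ.filter (fun j' => ((commsIn n N C U).orderIsoOfFin rfl j').1 ∈ γ)


/-! ### Kernels of networks, alternating networks, and the polygon of a word -/

/-- The commutators of `N` surviving in the `k`-kernel of `N` (obtained by erasing the
first `k` and last `k` levels together with all commutators incident to them). -/
def kernelComms (n : ℕ) {m : ℕ} (N : Fin m → Fin (n - 1)) (k : ℕ) : Finset (Fin m) :=
  univ.filter (fun j => k ≤ (N j).1 ∧ (N j).1 + k < n - 1)

/-- The `k`-kernel of the network `N`: a network with `n - 2k` levels. -/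
def kernelNet (n : ℕ) {m : ℕ} (N : Fin m → Fin (n - 1)) (k : ℕ) :
    Fin (kernelComms n N k).card → Fin (n - 2 * k - 1) :=
  fun j' => ⟨(N ((kernelComms n N k).orderIsoOfFin rfl j').1).1 - k, by
    have h := ((kernelComms n N k).orderIsoOfFin rfl j').2
    have h2 := (Finset.mem_filter.mp h).2
    omega⟩

/-- The commutator `j` is adjacent to the level `ℓ`. -/
def Touches {n m : ℕ} (N : Fin m → Fin (n - 1)) (ℓ : ℕ) (j : Fin m) : Prop :=
  (N j).1 = ℓ ∨ (N j).1 + 1 = ℓ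

/-- The network `N` is alternating: the commutators adjacent to each intermediate level are
alternatively located above and below it. -/
def IsAlternating {n m : ℕ} (N : Fin m → Fin (n - 1)) : Prop :=
  ∀ ℓ : ℕ, 0 < ℓ → ℓ + 1 < n → ∀ j j' : Fin m, j < j' →
    Touches N ℓ j → Touches N ℓ j' → (∀ j'', j < j'' → j'' < j' → ¬ Touches N ℓ j'') →
    N j ≠ N j'

/-- The `i`-th pseudoline of the arrangement `C` touches the level `ℓ` somewhere. -/
def TouchesLevel (n : ℕ) {m : ℕ} (N : Fin m → Fin (n - 1)) (C : Finset (Fin m))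
    (i : Fin n) (ℓ : ℕ) : Prop :=
  ∃ t, t ≤ m ∧ (statePerm n N C t i).1 = ℓ

/-- `M` is the reduced alternating sorting network `N_x` associated to the word
`x ∈ {a,b}^{n-2}` (where `a` is encoded by `true` and `b` by `false`): it is reduced
(it has `n.choose 2` commutators, all of which are crossings of its unique supported
pseudoline arrangement), alternating, and for each `i` its `(i+1)`-st pseudoline touches
the top level if `x i = a` and the bottom level if `x i = b`. -/
def IsNetworkOfWord (n : ℕ) {m : ℕ} (M : Fin m → Fin (n - 1)) (x : Fin (n - 2) → Bool) : Prop :=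
  m = n.choose 2 ∧ IsArr n M Finset.univ ∧ IsAlternating M ∧
    ∀ i : Fin (n - 2),
      (x i = true →
        TouchesLevel n M Finset.univ ⟨i.1 + 1, by have := i.2; omega⟩ (n - 1)) ∧
      (x i = false →
        TouchesLevel n M Finset.univ ⟨i.1 + 1, by have := i.2; omega⟩ 0)

/-- The position of the vertex `v` of the polygon `P_x` in the cyclic (counterclockwise)
order along the boundary of `P_x`: first `p_1`, then the vertices below the horizontal
axis from left to right, then `p_n`, then the vertices above the axis from right to left. -/
def cpos (n : ℕ) (x : Fin (n - 2) → Bool) (v : Fin n) : ℕ :=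
  if v.1 = 0 then 0
  else if v.1 = n - 1 then (univ.filter (fun i : Fin (n - 2) => x i = false)).card + 1
  else if h : v.1 = 0 ∨ v.1 = n - 1 then 0
  else if x ⟨v.1 - 1, by have := v.2; omega⟩ = false then
    (univ.filter (fun i : Fin (n - 2) => i.1 < v.1 - 1 ∧ x i = false)).card + 1
  else
    (univ.filter (fun i : Fin (n - 2) => x i = false)).card + 2 +
      (univ.filter (fun i : Fin (n - 2) => v.1 - 1 < i.1 ∧ x i = true)).card

/-- `c` lies strictly between `a` and `b`. -/
def Btw (a b c : ℕ) : Prop := min a b < c ∧ c < max a b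

/-- The diagonals `d` and `e` of the polygon `P_x` cross (in their interior): exactly one
endpoint of `e` lies on each side of `d`. -/
def CrossesIn (n : ℕ) (x : Fin (n - 2) → Bool) (d e : Fin n × Fin n) : Prop :=
  (Btw (cpos n x d.1) (cpos n x d.2) (cpos n x e.1) ∧
      ¬ Btw (cpos n x d.1) (cpos n x d.2) (cpos n x e.2)) ∨
  (¬ Btw (cpos n x d.1) (cpos n x d.2) (cpos n x e.1) ∧
      Btw (cpos n x d.1) (cpos n x d.2) (cpos n x e.2))

/-- `d` is an internal diagonal of the polygon `P_x`: its endpoints are distinct and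
non-consecutive on the boundary. -/
def IsInternal (n : ℕ) (x : Fin (n - 2) → Bool) (d : Fin n × Fin n) : Prop :=
  d.1 ≠ d.2 ∧ (cpos n x d.1 + 1) % n ≠ cpos n x d.2 ∧ (cpos n x d.2 + 1) % n ≠ cpos n x d.1

/-- The label of the commutator `j` of a reduced network: the pair of indices of the two
pseudolines of the unique supported arrangement which cross at `j` (smallest first). -/
def commLabel (n : ℕ) {m : ℕ} (M : Fin m → Fin (n - 1)) (j : Fin m) : Fin n × Fin n :=
  (pLow n M Finset.univ j, pHigh n M Finset.univ j)

/-! ### Multitriangulations: valid sequences and the sets `D(σ)` -/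

/-- The sequence `0^k σ 0^k ∈ {0,1}^n` obtained by appending `k` zeros before and after
`σ ∈ {0,1}^(n-2k)` (`1` is encoded by `true` and `0` by `false`). -/
def extSeq (n k : ℕ) (σ : Fin (n - 2 * k) → Bool) (t : Fin n) : Bool :=
  if h : k ≤ t.1 ∧ t.1 < k + (n - 2 * k) then σ ⟨t.1 - k, by omega⟩ else false

/-- The positions of the zeros of the extended sequence `0^k σ 0^k`. -/
def zeroSet (n k : ℕ) (σ : Fin (n - 2 * k) → Bool) : Finset (Fin n) :=
  univ.filter (fun t => extSeq n k σ t = false)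

/-- The set `D(σ)` of edges `[ζ_i(σ), ζ_{i+k}(σ)]` of the `n`-gon, where `ζ_i(σ)` denotes
the position of the `i`-th zero of `0^k σ 0^k`. -/
def DsetP (n k : ℕ) (σ : Fin (n - 2 * k) → Bool) (p : Fin n × Fin n) : Prop :=
  ∃ i : Fin (zeroSet n k σ).card, ∃ hik : i.1 + k < (zeroSet n k σ).card,
    p = (((zeroSet n k σ).orderIsoOfFin rfl i).1,
         ((zeroSet n k σ).orderIsoOfFin rfl ⟨i.1 + k, hik⟩).1)

/-- A sequence of `{0,1}^q` is `k`-valid if it is neither `0^q` nor `1^q` and contains no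
factor `1 0^r 1` with `r ≥ k`. -/
def KValid (q k : ℕ) (σ : Fin q → Bool) : Prop :=
  (∃ i, σ i = true) ∧ (∃ i, σ i = false) ∧
    ¬ ∃ i j : Fin q, i < j ∧ σ i = true ∧ σ j = true ∧
        (∀ t, i < t → t < j → σ t = false) ∧ k ≤ j.1 - i.1 - 1

/-! ### The simplicial complex `Δ_n^k` of multitriangulations -/

/-- `p` encodes a `k`-relevant diagonal of a convex `q`-gon with vertices `0,…,q-1` in
cyclic order: it has at least `k` vertices of the polygon (strictly) on each side. -/
def IsRelevantDiag (q k : ℕ) (p : Fin q × Fin q) : Prop :=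
  p.1.1 < p.2.1 ∧ p.1.1 + k + 1 ≤ p.2.1 ∧ k + p.2.1 + 1 ≤ q + p.1.1

/-- Two diagonals of the convex `q`-gon cross. -/
def DiagCross {q : ℕ} (p e : Fin q × Fin q) : Prop :=
  (p.1.1 < e.1.1 ∧ e.1.1 < p.2.1 ∧ p.2.1 < e.2.1) ∨
  (e.1.1 < p.1.1 ∧ p.1.1 < e.2.1 ∧ e.2.1 < p.2.1)

/-- `γ` is a face of the simplicial complex `Δ_q^k`: a `(k+1)`-crossing-free set of
`k`-relevant diagonals of the convex `q`-gon. -/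
def IsFaceDelta (q k : ℕ) (γ : Finset (Fin q × Fin q)) : Prop :=
  (∀ p ∈ γ, IsRelevantDiag q k p) ∧
    ∀ S ⊆ γ, S.card = k + 1 → ¬ (∀ p ∈ S, ∀ e ∈ S, p ≠ e → DiagCross p e)

/-! Sweep the network from left to right. If `C` and `C'` first differ at the commutator `j`,
say `j ∈ C` and `j ∉ C'`, then both arrangements coincide before `j`, so the same pseudolines
`a` (above) and `b` (below) enter `j` in both. In `C'` the contact `j` yields an arc `a → b`.
In `C` the pseudolines `a` and `b` cross at `j`, and since two pseudolines cross only once,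
`a` stays below `b` after `j`: every arc `a → b` of `C` comes from a contact before `j`, which
is an arc `a → b` of `C'` as well. So `C'` has more arcs `a → b` than `C`.

Two pseudolines cross only once because `w₀` reverses every pair, so every pair crosses at
least once, while there are only `n.choose 2` crossings. -/

lemma _root_.List.prod_map_ite_one {α M : Type*} [Monoid M] (p : α → Prop) [DecidablePred p]
    (f : α → M) (l : List α) :
    (l.map fun a => if p a then f a else 1).prod = ((l.filter p).map f).prod := by
  induction l with
  | nil => simp
  | cons a l ih => by_cases h : p a <;> simp [h, ih]

lemma adjT_lt_adjT_iff {n : ℕ} (i : Fin (n - 1)) {x y : Fin n}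
    (hxy : ¬ (x.1 = i.1 ∧ y.1 = i.1 + 1)) (hyx : ¬ (y.1 = i.1 ∧ x.1 = i.1 + 1)) :
    adjT n i x < adjT n i y ↔ x < y := by
  simp only [adjT, Equiv.swap_apply_def, Fin.lt_def]
  split_ifs <;> simp_all [Fin.ext_iff] <;> omega

section Sweep

variable {n m : ℕ} (N : Fin m → Fin (n - 1)) (C : Finset (Fin m))

def stepPerm (t : ℕ) : Equiv.Perm (Fin n) :=
  if h : t < m then (if (⟨t, h⟩ : Fin m) ∈ C then adjT n (N ⟨t, h⟩) else 1) else 1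

lemma statePerm_succ (t : ℕ) :
    statePerm n N C (t + 1) = stepPerm N C t * statePerm n N C t := rfl

lemma stepPerm_of_mem {j : Fin m} (hj : j ∈ C) : stepPerm N C j = adjT n (N j) := by
  simp [stepPerm, hj]

lemma stepPerm_of_notMem {j : Fin m} (hj : j ∉ C) : stepPerm N C j = 1 := by
  simp [stepPerm, hj]

lemma stepPerm_inv (t : ℕ) : (stepPerm N C t)⁻¹ = stepPerm N C t := by
  unfold stepPerm
  split_ifs <;> simp [adjT]

lemma inv_statePerm_eq_prod (t : ℕ) :
    (statePerm n N C t)⁻¹ = ((List.range t).map (stepPerm N C)).prod := by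
  induction t with
  | zero => simp [statePerm]
  | succ t ih => simp [statePerm_succ, mul_inv_rev, stepPerm_inv, ih, List.range_succ]

lemma prod_stepPerm_eq :
    ((List.range m).map (stepPerm N C)).prod =
      (((List.finRange m).filter (fun j => j ∈ C)).map (fun j => adjT n (N j))).prod := by
  have hstep : stepPerm N C ∘ Fin.val = fun j => if j ∈ C then adjT n (N j) else 1 := by
    funext j
    simp [stepPerm]
  rw [← List.map_coe_finRange_eq_range, List.map_map, hstep]
  exact List.prod_map_ite_one _ _ _

lemma statePerm_eq_w0 (hC : IsArr n N C) : statePerm n N C m = w0 n := by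
  rw [← inv_inv (statePerm n N C m), inv_statePerm_eq_prod, prod_stepPerm_eq, hC.2]
  ext i
  simp [w0, Equiv.Perm.inv_def, Fin.revPerm_symm]

lemma statePerm_apply_pLow (j : Fin m) :
    statePerm n N C j (pLow n N C j) = ⟨(N j).1, by have := (N j).2; omega⟩ := by
  simp [pLow]

lemma statePerm_apply_pHigh (j : Fin m) :
    statePerm n N C j (pHigh n N C j) = ⟨(N j).1 + 1, by have := (N j).2; omega⟩ := by
  simp [pHigh]

lemma eq_pLow_of_statePerm {j : Fin m} {x : Fin n} (hx : (statePerm n N C j x).1 = (N j).1) :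
    x = pLow n N C j := by
  rw [pLow, Equiv.Perm.eq_inv_iff_eq]
  exact Fin.ext hx

lemma eq_pHigh_of_statePerm {j : Fin m} {x : Fin n}
    (hx : (statePerm n N C j x).1 = (N j).1 + 1) : x = pHigh n N C j := by
  rw [pHigh, Equiv.Perm.eq_inv_iff_eq]
  exact Fin.ext hx

lemma pLow_ne_pHigh (j : Fin m) : pLow n N C j ≠ pHigh n N C j := by
  intro h
  have := statePerm_apply_pHigh N C j
  rw [← h, statePerm_apply_pLow, Fin.mk.injEq] at this
  omega

lemma arcSrc_of_notMem {j : Fin m} (hj : j ∉ C) : arcSrc n N C j = pHigh n N C j := by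
  rw [arcSrc, statePerm_succ, stepPerm_of_notMem N C hj, one_mul, pHigh]

lemma arcTgt_of_notMem {j : Fin m} (hj : j ∉ C) : arcTgt n N C j = pLow n N C j := by
  rw [arcTgt, statePerm_succ, stepPerm_of_notMem N C hj, one_mul, pLow]

def crossPair (j : Fin m) : Sym2 (Fin n) := s(pLow n N C j, pHigh n N C j)

lemma statePerm_succ_lt_iff_or (t : ℕ) (x y : Fin n) :
    (statePerm n N C (t + 1) x < statePerm n N C (t + 1) y ↔
        statePerm n N C t x < statePerm n N C t y) ∨
      ∃ j ∈ C, j.1 = t ∧ crossPair N C j = s(x, y) := by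
  by_cases hcross : ∃ j ∈ C, j.1 = t ∧ crossPair N C j = s(x, y)
  · exact Or.inr hcross
  left
  rw [statePerm_succ, Equiv.Perm.mul_apply, Equiv.Perm.mul_apply]
  by_cases ht : ∃ j ∈ C, j.1 = t
  · obtain ⟨j, hj, rfl⟩ := ht
    rw [stepPerm_of_mem N C hj]
    refine adjT_lt_adjT_iff _ (fun hxy => hcross ⟨j, hj, rfl, ?_⟩)
      (fun hyx => hcross ⟨j, hj, rfl, ?_⟩)
    · rw [crossPair, ← eq_pLow_of_statePerm N C hxy.1, ← eq_pHigh_of_statePerm N C hxy.2]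
    · rw [crossPair, ← eq_pLow_of_statePerm N C hyx.1, ← eq_pHigh_of_statePerm N C hyx.2,
        Sym2.eq_swap]
  · have hstep : stepPerm N C t = 1 := by
      unfold stepPerm
      split_ifs with htm hmem
      · exact absurd ⟨⟨t, htm⟩, hmem, rfl⟩ ht
      · rfl
      · rfl
    simp [hstep]

lemma exists_crossPair_eq (hC : IsArr n N C) {x y : Fin n} (hxy : x ≠ y) :
    ∃ j ∈ C, crossPair N C j = s(x, y) := by
  by_contra! hnone
  have hkeep : ∀ t, statePerm n N C t x < statePerm n N C t y ↔ x < y := by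
    intro t
    induction t with
    | zero => rfl
    | succ t ih =>
      rcases statePerm_succ_lt_iff_or N C t x y with hiff | ⟨j, hj, -, hjxy⟩
      · exact hiff.trans ih
      · exact absurd hjxy (hnone j hj)
  have hrev := hkeep m
  rw [statePerm_eq_w0 N C hC] at hrev
  simp only [w0, Fin.revPerm_apply, Fin.rev_lt_rev] at hrev
  rcases hxy.lt_or_gt with h | h
  · exact lt_asymm h (hrev.2 h)
  · exact lt_asymm h (hrev.1 h)

lemma crossPair_injOn (hC : IsArr n N C) : Set.InjOn (crossPair N C) C := by
  refine Finset.injOn_of_surjOn_of_card_le (t := (⊤ : SimpleGraph (Fin n)).edgeFinset) _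
    (fun j _ => ?_) (fun e he => ?_) ?_
  · simpa [crossPair] using pLow_ne_pHigh N C j
  · induction e using Sym2.ind with
    | _ x y => exact exists_crossPair_eq N C hC (by simpa using he)
  · rw [SimpleGraph.card_edgeFinset_top_eq_card_choose_two, Fintype.card_fin, hC.1]

lemma statePerm_pHigh_lt_pLow (hC : IsArr n N C) {j : Fin m} (hj : j ∈ C) {t : ℕ}
    (ht : j.1 < t) :
    statePerm n N C t (pHigh n N C j) < statePerm n N C t (pLow n N C j) := by
  induction t, ht using Nat.le_induction with
  | base =>
    rw [statePerm_succ, stepPerm_of_mem N C hj, Equiv.Perm.mul_apply, Equiv.Perm.mul_apply,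
      statePerm_apply_pHigh, statePerm_apply_pLow, adjT, Equiv.swap_apply_right,
      Equiv.swap_apply_left]
    simp [Fin.lt_def]
  | succ t ht ih =>
    rcases statePerm_succ_lt_iff_or N C t (pHigh n N C j) (pLow n N C j) with
      hiff | ⟨k, hk, hkt, hkj⟩
    · exact hiff.2 ih
    · have : k = j := crossPair_injOn N C hC hk hj (hkj.trans Sym2.eq_swap)
      omega

lemma statePerm_eq_of_forall_lt_iff {C' : Finset (Fin m)} {T : ℕ}
    (hagree : ∀ s : Fin m, s.1 < T → (s ∈ C ↔ s ∈ C')) :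
    statePerm n N C T = statePerm n N C' T := by
  induction T with
  | zero => rfl
  | succ T ih =>
    rw [statePerm_succ, statePerm_succ, ih fun s hs => hagree s (by omega)]
    by_cases hT : T < m
    · simp [stepPerm, hT, hagree ⟨T, hT⟩ (Nat.lt_succ_self T)]
    · simp [stepPerm, hT]

def arcContacts (p : Fin n × Fin n) : Finset (Fin m) :=
  {j | j ∉ C ∧ (arcSrc n N C j, arcTgt n N C j) = p}

lemma mem_arcContacts {p : Fin n × Fin n} {j : Fin m} :
    j ∈ arcContacts N C p ↔ j ∉ C ∧ (arcSrc n N C j, arcTgt n N C j) = p := by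
  simp [arcContacts]

lemma count_contactMG (p : Fin n × Fin n) : (contactMG n N C).count p = #(arcContacts N C p) := by
  simp only [contactMG, arcContacts, Multiset.count_map, Finset.filter_val,
    Multiset.filter_filter, eq_comm, and_comm]
  rfl

lemma contactMG_ne_of_first_diff (hC : IsArr n N C) {C' : Finset (Fin m)} {j : Fin m}
    (hjC : j ∈ C) (hjC' : j ∉ C') (hagree : ∀ s < j, s ∈ C ↔ s ∈ C') :
    contactMG n N C ≠ contactMG n N C' := by
  have hstate : ∀ t ≤ j.1, statePerm n N C t = statePerm n N C' t := fun t ht =>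
    statePerm_eq_of_forall_lt_iff N C fun s hs => hagree s (by rw [Fin.lt_def]; omega)
  set p := (pHigh n N C j, pLow n N C j)
  have hbefore : ∀ t ∈ arcContacts N C p, t < j := by
    intro t ht
    obtain ⟨htC, hp⟩ := (mem_arcContacts N C).1 ht
    rw [arcSrc_of_notMem N C htC, arcTgt_of_notMem N C htC, Prod.mk.injEq] at hp
    by_contra! hjt
    have hlt := statePerm_pHigh_lt_pLow N C hC hjC
      (lt_of_le_of_ne hjt fun h => htC (Fin.ext h ▸ hjC))
    rw [← hp.1, ← hp.2, statePerm_apply_pHigh, statePerm_apply_pLow, Fin.mk_lt_mk] at hlt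
    omega
  have hsub : arcContacts N C p ⊆ arcContacts N C' p := by
    intro t ht
    have htj := hbefore t ht
    rw [mem_arcContacts] at ht
    rw [mem_arcContacts, arcSrc, arcTgt, ← hstate (t.1 + 1) htj]
    exact ⟨fun h => ht.1 ((hagree t htj).2 h), ht.2⟩
  have hj : j ∈ arcContacts N C' p := by
    rw [mem_arcContacts, arcSrc_of_notMem N C' hjC', arcTgt_of_notMem N C' hjC', pHigh, pLow,
      ← hstate j le_rfl]
    exact ⟨hjC', rfl⟩
  have hj' : j ∉ arcContacts N C p := fun hj' => ((mem_arcContacts N C).1 hj').1 hjC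
  intro h
  have hcount := congrArg (Multiset.count p) h
  rw [count_contactMG, count_contactMG] at hcount
  exact (card_lt_card ((ssubset_iff_of_subset hsub).2 ⟨j, hj, hj'⟩)).ne hcount

end Sweep

/-- Let `N` be a sorting network with `n` levels.  If two pseudoline
arrangements supported by `N` have equal contact graphs (as directed multigraphs on the
labeled vertex set `{1,…,n}`), then they are equal. -/
theorem arrangement_eq_of_contactGraph_eq (n m : ℕ) (N : Fin m → Fin (n - 1))
    (C C' : Finset (Fin m)) (hC : IsArr n N C) (hC' : IsArr n N C')
    (h : contactMG n N C = contactMG n N C') : C = C' := by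
  by_contra hne
  have hdiff : (symmDiff C C').Nonempty := symmDiff_nonempty.2 hne
  set j := (symmDiff C C').min' hdiff
  have hagree : ∀ s < j, s ∈ C ↔ s ∈ C' := fun s hs => by
    by_contra hs'
    exact (min'_le _ s (mem_symmDiff.2 (by tauto))).not_gt hs
  rcases mem_symmDiff.1 (min'_mem _ hdiff) with ⟨hjC, hjC'⟩ | ⟨hjC', hjC⟩
  · exact contactMG_ne_of_first_diff N C hC hjC hjC' hagree h
  · exact contactMG_ne_of_first_diff N C' hC' hjC' hjC (fun s hs => (hagree s hs).symm) h.symm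

end BrickP
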